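/- arXiv:2205.07392 — 2 statements merged into one kernel-verified Lean document; each statement's English description precedes it below -/
import Mathlib

section
/- Let n ≥ 5 and let F be a 5-antichain saturated family of subsets of [n]. Then it is not the case that F contains exactly three sets of size i for every i with 1 ≤ i ≤ n − 1. -/
/-!
By Dilworth's theorem, a family with no 5-antichain is the union of four chains, and saturation
says that a set comparable with every member of one of these chains already lies in `F`: so do
all sets between consecutive members of a chain and all subsets of its least nonempty member.
If every level holds three sets, the points `U` whose singletons lie in `F` form a 3-set that
contains the least nonempty member of every chain. Following the chain that misses level 2, one
finds that every 2-set of `F` lies in `U`, and then that `U` itself lies on that chain. The chain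
missing level 3 passes through a pair `l ⊂ U` and jumps past level 3, so some `insert q l` with
`q ∉ U` lies in `F`; its chain meets level 2 in a pair of `U` inside `insert q l`, that is in `l`,
so `insert q l` is a set of level 3 on the chain missing level 3.
-/

open Finset

/-- A family `F` of finite subsets of ℕ contains a `k`-antichain: there are `k` sets in `F`
that are pairwise incomparable under inclusion. -/
def ContainsAntichain (k : ℕ) (F : Finset (Finset ℕ)) : Prop :=
  ∃ S ⊆ F, S.card = k ∧ ∀ A ∈ S, ∀ B ∈ S, A ≠ B → ¬ A ⊆ B

/-- `F` is a `k`-antichain saturated family of subsets of `[n] = {1, …, n}`: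
all members are subsets of `[n]`, `F` contains no `k`-antichain, but adding any new
subset of `[n]` creates a `k`-antichain. -/
def IsAntichainSaturated (n k : ℕ) (F : Finset (Finset ℕ)) : Prop :=
  (∀ A ∈ F, A ⊆ Finset.Icc 1 n) ∧
  ¬ ContainsAntichain k F ∧
  ∀ X ⊆ Finset.Icc 1 n, X ∉ F → ContainsAntichain k (insert X F)

section Dilworth

variable {α : Type*} [PartialOrder α]

def WidthLE (s : Finset α) (k : ℕ) : Prop :=
  ∀ t ⊆ s, IsAntichain (· ≤ ·) (t : Set α) → t.card ≤ k

def IsChainColoring (s : Finset α) (k : ℕ) (f : α → ℕ) : Prop :=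
  (∀ a ∈ s, f a < k) ∧ ∀ a ∈ s, ∀ b ∈ s, f a = f b → a ≤ b ∨ b ≤ a

namespace IsChainColoring

variable {s t : Finset α} {k : ℕ} {f : α → ℕ}

theorem injOn (hf : IsChainColoring s k f) (hts : t ⊆ s)
    (ht : IsAntichain (· ≤ ·) (t : Set α)) : Set.InjOn f t := by
  intro a ha b hb hab
  by_contra hne
  rcases hf.2 a (hts ha) b (hts hb) hab with h | h
  · exact ht ha hb hne h
  · exact ht hb ha (Ne.symm hne) h

theorem image_subset_range (hf : IsChainColoring s k f) (hts : t ⊆ s) :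
    t.image f ⊆ range k := by
  intro i hi
  obtain ⟨a, ha, rfl⟩ := mem_image.1 hi
  exact mem_range.2 (hf.1 a (hts ha))

theorem exists_color_eq (hf : IsChainColoring s k f) (hts : t ⊆ s)
    (ht : IsAntichain (· ≤ ·) (t : Set α)) (hcard : t.card = k) {i : ℕ} (hi : i < k) :
    ∃ a ∈ t, f a = i := by
  have himage : t.image f = range k :=
    eq_of_subset_of_card_le (hf.image_subset_range hts)
      (by rw [card_range, card_image_of_injOn (hf.injOn hts ht), hcard])
  have hmem : i ∈ t.image f := by rw [himage]; exact mem_range.2 hi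
  simpa using hmem

theorem exists_missing_color (hf : IsChainColoring s k f) (hts : t ⊆ s)
    (ht : IsAntichain (· ≤ ·) (t : Set α)) (hcard : t.card + 1 = k) :
    ∃ m < k, (∀ a ∈ t, f a ≠ m) ∧ ∀ i < k, i ≠ m → ∃ a ∈ t, f a = i := by
  obtain ⟨m, hm⟩ : ∃ m, range k \ t.image f = {m} := by
    rw [← card_eq_one, card_sdiff_of_subset (hf.image_subset_range hts), card_range,
      card_image_of_injOn (hf.injOn hts ht)]
    omega
  have hm' : m ∈ range k \ t.image f := hm ▸ mem_singleton_self m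
  simp only [mem_sdiff, mem_range, mem_image, not_exists, not_and] at hm'
  refine ⟨m, hm'.1, hm'.2, fun i hi him => ?_⟩
  by_contra hmiss
  have : i ∈ range k \ t.image f := by simpa [hi] using hmiss
  exact him (by simpa [hm] using this)

theorem of_sdiff_isChain [DecidableEq α] {K : Finset α} {g : α → ℕ}
    (hg : IsChainColoring (s \ K) k g) (hK : IsChain (· ≤ ·) (K : Set α)) :
    IsChainColoring s (k + 1) (fun a => if a ∈ K then k else g a) := by
  refine ⟨fun a ha => ?_, fun a ha b hb hab => ?_⟩
  · dsimp only
    split_ifs with haK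
    · exact Nat.lt_succ_self k
    · exact Nat.lt_succ_of_lt (hg.1 a (mem_sdiff.2 ⟨ha, haK⟩))
  · by_cases haK : a ∈ K <;> by_cases hbK : b ∈ K <;> simp only [haK, hbK, if_true, if_false] at hab
    · exact hK.total haK hbK
    · exact absurd hab.symm (hg.1 b (mem_sdiff.2 ⟨hb, hbK⟩)).ne
    · exact absurd hab (hg.1 a (mem_sdiff.2 ⟨ha, haK⟩)).ne
    · exact hg.2 a (mem_sdiff.2 ⟨ha, haK⟩) b (mem_sdiff.2 ⟨hb, hbK⟩) hab

end IsChainColoring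

variable {s : Finset α} {k : ℕ}

theorem Maximal.exists_le_of_widthLE {m : ℕ} {a : α} (ha : Maximal (· ∈ s) a)
    (hw : WidthLE s m) {x : Fin m → α} (hxs : ∀ i, x i ∈ s) (hxa : ∀ i, x i ≠ a)
    (hx : Pairwise fun i j => ¬ x i ≤ x j) : ∃ i, x i ≤ a := by
  classical
  by_contra! hnot
  have hxinj : Function.Injective x := fun i j h => by_contra fun hij => hx hij h.le
  have hanti : IsAntichain (· ≤ ·) ((insert a (univ.image x) : Finset α) : Set α) := by
    rw [coe_insert, coe_image, coe_univ, Set.image_univ]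
    refine IsAntichain.insert ?_ (fun b hb _ => ?_) (fun b hb _ hab => ?_)
    · rintro _ ⟨i, rfl⟩ _ ⟨j, rfl⟩ hne
      exact hx fun h => hne (h ▸ rfl)
    · obtain ⟨i, rfl⟩ := hb
      exact hnot i
    · obtain ⟨i, rfl⟩ := hb
      exact hnot i (ha.2 (hxs i) hab)
  have hcard := hw _ (insert_subset ha.1 fun b hb => by
    obtain ⟨i, -, rfl⟩ := mem_image.1 hb
    exact hxs i) hanti
  rw [card_insert_of_notMem fun h => by
      obtain ⟨i, -, hi⟩ := mem_image.1 h
      exact hxa i hi,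
    card_image_of_injective _ hxinj, card_univ, Fintype.card_fin] at hcard
  omega

theorem IsChainColoring.exists_forall_isAntichain_exists_le {f : α → ℕ}
    (hf : IsChainColoring s (k + 1) f) (hw : WidthLE s (k + 1)) (hk : ¬ WidthLE s k) :
    ∃ x : Fin (k + 1) → α, (∀ i, x i ∈ s) ∧ (∀ i, f (x i) = i) ∧
      (Pairwise fun i j => ¬ x i ≤ x j) ∧ ∀ t ⊆ s, IsAntichain (· ≤ ·) (t : Set α) →
        t.card = k + 1 → ∀ i : Fin (k + 1), ∃ c ∈ t, f c = i ∧ c ≤ x i := by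
  classical
  unfold WidthLE at hk
  push Not at hk
  obtain ⟨t₀, ht₀s, ht₀, ht₀k⟩ := hk
  replace ht₀k : t₀.card = k + 1 := le_antisymm (hw t₀ ht₀s ht₀) ht₀k
  set Good : α → Prop := fun b =>
    ∃ t ⊆ s, IsAntichain (· ≤ ·) (t : Set α) ∧ t.card = k + 1 ∧ b ∈ t
  -- `x i` is the largest element of colour `i` lying in a maximum antichain.
  have hx : ∀ i : Fin (k + 1), ∃ x, Maximal (· ∈ s.filter fun b => f b = i ∧ Good b) x := by
    intro i
    obtain ⟨b, hb, hbi⟩ := hf.exists_color_eq ht₀s ht₀ ht₀k i.isLt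
    exact exists_maximal ⟨b, mem_filter.2 ⟨ht₀s hb, hbi, t₀, ht₀s, ht₀, ht₀k, hb⟩⟩
  choose x hx using hx
  have hxs : ∀ i, x i ∈ s := fun i => (mem_filter.1 (hx i).1).1
  have hxf : ∀ i, f (x i) = i := fun i => (mem_filter.1 (hx i).1).2.1
  have hbelow : ∀ t ⊆ s, IsAntichain (· ≤ ·) (t : Set α) → t.card = k + 1 →
      ∀ i : Fin (k + 1), ∃ c ∈ t, f c = i ∧ c ≤ x i := by
    intro t hts ht hcard i
    obtain ⟨c, hct, hci⟩ := hf.exists_color_eq hts ht hcard i.isLt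
    refine ⟨c, hct, hci, ?_⟩
    rcases hf.2 c (hts hct) (x i) (hxs i) (by rw [hci, hxf]) with h | h
    · exact h
    · exact (hx i).2 (mem_filter.2 ⟨hts hct, hci, t, hts, ht, hcard, hct⟩) h
  refine ⟨x, hxs, hxf, fun i j hij hle => ?_, hbelow⟩
  obtain ⟨t, hts, ht, hcard, hjt⟩ := (mem_filter.1 (hx j).1).2.2
  obtain ⟨c, hct, hci, hcx⟩ := hbelow t hts ht hcard i
  have hcj : c ≠ x j := fun h => hij (Fin.ext (by rw [← hci, h, hxf]))
  exact ht hct hjt hcj (hcx.trans hle)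

theorem exists_isChain_widthLE_sdiff [DecidableEq α] {a : α} {f : α → ℕ}
    (ha : Maximal (· ∈ s) a) (hw : WidthLE s (k + 1))
    (hf : IsChainColoring (s.erase a) (k + 1) f) :
    ∃ K ⊆ s, a ∈ K ∧ IsChain (· ≤ ·) (K : Set α) ∧ WidthLE (s \ K) k := by
  classical
  by_cases hsmall : WidthLE (s.erase a) k
  · refine ⟨{a}, singleton_subset_iff.2 ha.1, mem_singleton_self a,
      Set.Subsingleton.isChain (by simp), ?_⟩
    rwa [sdiff_singleton_eq_erase]
  have hs' : s.erase a ⊆ s := erase_subset a s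
  obtain ⟨x, hxs, hxf, hxanti, hbelow⟩ := hf.exists_forall_isAntichain_exists_le
    (fun t hts ht => hw t (hts.trans hs') ht) hsmall
  obtain ⟨i₀, hi₀⟩ := ha.exists_le_of_widthLE hw (fun i => hs' (hxs i))
    (fun i => (mem_erase.1 (hxs i)).1) hxanti
  -- Removing `a` together with the part of chain `i₀` below `x i₀` kills every maximum antichain.
  set K := insert a ((s.erase a).filter fun b => f b = i₀ ∧ b ≤ x i₀)
  have hKs : K ⊆ s := insert_subset ha.1 ((filter_subset _ _).trans hs')
  refine ⟨K, hKs, mem_insert_self _ _, ?_, fun t hts ht => ?_⟩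
  · rw [coe_insert]
    refine IsChain.insert (fun b hb c hc _ => ?_) (fun b hb _ => ?_)
    · obtain ⟨hb, hbf, -⟩ := mem_filter.1 hb
      obtain ⟨hc, hcf, -⟩ := mem_filter.1 hc
      exact hf.2 b hb c hc (hbf.trans hcf.symm)
    · exact Or.inr ((mem_filter.1 hb).2.2.trans hi₀)
  by_contra! hkt
  obtain ⟨t', ht't, ht'c⟩ := exists_subset_card_eq hkt
  have ht's : t' ⊆ s.erase a := fun b hb => by
    have := mem_sdiff.1 (hts (ht't hb))
    exact mem_erase.2 ⟨fun h => this.2 (h ▸ mem_insert_self _ _), this.1⟩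
  obtain ⟨c, hct, hci, hcx⟩ := hbelow t' ht's (ht.subset ht't) ht'c i₀
  exact (mem_sdiff.1 (hts (ht't hct))).2 (mem_insert_of_mem (mem_filter.2 ⟨ht's hct, hci, hcx⟩))

theorem exists_isChainColoring (s : Finset α) (k : ℕ) (hw : WidthLE s k) :
    ∃ f, IsChainColoring s k f := by
  classical
  induction s using Finset.strongInduction generalizing k with
  | H s ih =>
  rcases s.eq_empty_or_nonempty with rfl | hs
  · exact ⟨0, by simp [IsChainColoring]⟩
  obtain ⟨a, ha⟩ := s.exists_maximal hs
  obtain ⟨k, rfl⟩ : ∃ j, k = j + 1 := Nat.exists_eq_add_one.2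
    (hw {a} (singleton_subset_iff.2 ha.1) (by simp))
  obtain ⟨f, hf⟩ := ih _ (erase_ssubset ha.1) (k + 1)
    fun t hts ht => hw t (hts.trans (erase_subset _ _)) ht
  obtain ⟨K, hKs, haK, hK, hwK⟩ := exists_isChain_widthLE_sdiff ha hw hf
  obtain ⟨g, hg⟩ := ih _ (sdiff_ssubset hKs ⟨a, haK⟩) k hwK
  exact ⟨_, hg.of_sdiff_isChain hK⟩

end Dilworth

section ChainColoringOfSets

variable {α : Type*} {s : Finset (Finset α)} {k : ℕ} {f : Finset α → ℕ} {A B : Finset α}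

theorem IsChainColoring.subset_of_card_le (hf : IsChainColoring s k f) (hA : A ∈ s)
    (hB : B ∈ s) (hAB : f A = f B) (hcard : A.card ≤ B.card) : A ⊆ B := by
  rcases hf.2 A hA B hB hAB with h | h
  · exact h
  · exact (eq_of_subset_of_card_le h hcard).symm ▸ subset_rfl

theorem IsChainColoring.eq_of_card_eq (hf : IsChainColoring s k f) (hA : A ∈ s)
    (hB : B ∈ s) (hAB : f A = f B) (hcard : A.card = B.card) : A = B :=
  eq_of_subset_of_card_le (hf.subset_of_card_le hA hB hAB hcard.le) hcard.ge

theorem IsChainColoring.exists_missing_color_of_card_filter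
    (hf : IsChainColoring s k f) {i : ℕ} (hi : (s.filter fun A => A.card = i).card + 1 = k) :
    ∃ m < k, (∀ B ∈ s, B.card = i → f B ≠ m) ∧ ∀ j < k, j ≠ m → ∃ B ∈ s, B.card = i ∧ f B = j := by
  obtain ⟨m, hm, hmiss, hhit⟩ := hf.exists_missing_color (filter_subset _ s)
    (Set.Sized.isAntichain fun A hA => (mem_filter.1 hA).2) hi
  refine ⟨m, hm, fun B hB hBi => hmiss B (mem_filter.2 ⟨hB, hBi⟩), fun j hj hjm => ?_⟩
  obtain ⟨B, hB, hBj⟩ := hhit j hj hjm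
  exact ⟨B, (mem_filter.1 hB).1, (mem_filter.1 hB).2, hBj⟩

def IsChainBottom (s : Finset (Finset α)) (f : Finset α → ℕ) (i : ℕ) (M : Finset α) : Prop :=
  M ∈ s ∧ f M = i ∧ M.Nonempty ∧ ∀ B ∈ s, f B = i → B.Nonempty → M ⊆ B

end ChainColoringOfSets

namespace IsAntichainSaturated

variable {n k : ℕ} {F : Finset (Finset ℕ)} {f : Finset ℕ → ℕ} {B X : Finset ℕ} {i : ℕ}

theorem widthLE (hF : IsAntichainSaturated n (k + 1) F) : WidthLE F k := by
  intro t htF ht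
  by_contra! hkt
  obtain ⟨S, hSt, hS⟩ := exists_subset_card_eq hkt
  exact hF.2.1 ⟨S, hSt.trans htF, hS, fun A hA B hB => ht.subset hSt hA hB⟩

theorem exists_antichain_incomparable (hF : IsAntichainSaturated n (k + 1) F)
    (hf : IsChainColoring F k f) (hX : X ⊆ Icc 1 n) (hXF : X ∉ F) :
    ∃ W ⊆ F, IsAntichain (· ≤ ·) (W : Set (Finset ℕ)) ∧ (∀ B ∈ W, ¬ B ⊆ X ∧ ¬ X ⊆ B) ∧
      ∀ i < k, ∃ B ∈ W, f B = i := by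
  obtain ⟨S, hSF, hScard, hS⟩ := hF.2.2 X hX hXF
  have hXS : X ∈ S := by
    by_contra hXS
    refine hF.2.1 ⟨S, fun B hB => ?_, hScard, hS⟩
    exact (mem_insert.1 (hSF hB)).resolve_left fun h => hXS (h ▸ hB)
  have hWF : S.erase X ⊆ F := fun B hB =>
    (mem_insert.1 (hSF (mem_of_mem_erase hB))).resolve_left (ne_of_mem_erase hB)
  have hW : IsAntichain (· ≤ ·) ((S.erase X : Finset (Finset ℕ)) : Set (Finset ℕ)) :=
    fun A hA B hB => hS A (mem_of_mem_erase hA) B (mem_of_mem_erase hB)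
  refine ⟨S.erase X, hWF, hW, fun B hB => ⟨?_, ?_⟩, fun i hi => hf.exists_color_eq hWF hW ?_ hi⟩
  · exact hS B (mem_of_mem_erase hB) X hXS (ne_of_mem_erase hB)
  · exact hS X hXS B (mem_of_mem_erase hB) (ne_of_mem_erase hB).symm
  · rw [card_erase_of_mem hXS, hScard, Nat.add_sub_cancel]

theorem mem_of_forall_comparable (hF : IsAntichainSaturated n (k + 1) F)
    (hf : IsChainColoring F k f) (hX : X ⊆ Icc 1 n) (hi : i < k)
    (hcomp : ∀ B ∈ F, f B = i → B ⊆ X ∨ X ⊆ B) : X ∈ F := by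
  by_contra hXF
  obtain ⟨W, hWF, -, hWX, hWcol⟩ := hF.exists_antichain_incomparable hf hX hXF
  obtain ⟨B, hBW, hBi⟩ := hWcol i hi
  exact (hcomp B (hWF hBW) hBi).elim (hWX B hBW).1 (hWX B hBW).2

theorem exists_interval_above (hF : IsAntichainSaturated n (k + 1) F)
    (hf : IsChainColoring F k f) (hB : B ∈ F) (hBn : B ≠ Icc 1 n) :
    ∃ C, B ⊂ C ∧ (C = Icc 1 n ∨ C ∈ F ∧ f C = f B) ∧ ∀ X, B ⊆ X → X ⊆ C → X ∈ F := by
  classical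
  -- `C` is the successor of `B` in its chain, or `[n]` if `B` is the top of its chain.
  obtain ⟨C, hBC, hCn, hC, hCmin⟩ : ∃ C, B ⊂ C ∧ C ⊆ Icc 1 n ∧
      (C = Icc 1 n ∨ C ∈ F ∧ f C = f B) ∧ ∀ D ∈ F, f D = f B → B ⊂ D → C ⊆ D := by
    rcases (F.filter fun D => f D = f B ∧ B ⊂ D).eq_empty_or_nonempty with h | h
    · refine ⟨Icc 1 n, ssubset_of_subset_of_ne (hF.1 B hB) hBn, subset_rfl, Or.inl rfl,
        fun D hD hDf hBD => ?_⟩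
      exact absurd (mem_filter.2 ⟨hD, hDf, hBD⟩) (h ▸ notMem_empty D)
    · obtain ⟨C, hC⟩ := exists_minimal h
      obtain ⟨hCF, hCf, hBC⟩ := mem_filter.1 hC.1
      refine ⟨C, hBC, hF.1 C hCF, Or.inr ⟨hCF, hCf⟩, fun D hD hDf hBD => ?_⟩
      rcases hf.2 C hCF D hD (hCf.trans hDf.symm) with h | h
      · exact h
      · exact hC.2 (mem_filter.2 ⟨hD, hDf, hBD⟩) h
  refine ⟨C, hBC, hC, fun X hBX hXC =>
    hF.mem_of_forall_comparable hf (hXC.trans hCn) (hf.1 B hB) fun D hD hDf => ?_⟩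
  rcases hf.2 D hD B hB hDf with h | h
  · exact Or.inl (h.trans hBX)
  · rcases LE.le.eq_or_ssubset h with rfl | h
    · exact Or.inl hBX
    · exact Or.inr (hXC.trans (hCmin D hD hDf h))

theorem exists_insert_mem (hF : IsAntichainSaturated n (k + 1) F)
    (hf : IsChainColoring F k f) (hB : B ∈ F) (hBn : B.card + 2 ≤ n)
    (hgap : ∀ C ∈ F, f C = f B → C.card ≠ B.card + 1) (x : ℕ) :
    ∃ q ∉ B, q ≠ x ∧ insert q B ∈ F := by
  have hBne : B ≠ Icc 1 n := fun h => by simp [h] at hBn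
  obtain ⟨C, hBC, hC, hint⟩ := hF.exists_interval_above hf hB hBne
  have hCcard : B.card + 2 ≤ C.card := by
    have := card_lt_card hBC
    rcases hC with rfl | ⟨hCF, hCf⟩
    · simpa using hBn
    · have := hgap C hCF hCf
      omega
  obtain ⟨q, hq⟩ : ((C \ B).erase x).Nonempty := by
    rw [← card_pos]
    have := card_sdiff_of_subset hBC.subset
    have := pred_card_le_card_erase (s := C \ B) (a := x)
    omega
  obtain ⟨hqx, hqC, hqB⟩ : q ≠ x ∧ q ∈ C ∧ q ∉ B := by simpa using hq
  exact ⟨q, hqB, hqx, hint _ (subset_insert q B) (insert_subset hqC hBC.subset)⟩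

theorem exists_isChainBottom (hF : IsAntichainSaturated n (k + 1) F)
    (hf : IsChainColoring F k f) {d : ℕ} (hd : d ∈ Icc 1 n) (hdF : {d} ∉ F) (hi : i < k) :
    ∃ M, IsChainBottom F f i M := by
  classical
  have hne : (F.filter fun B => f B = i ∧ B.Nonempty).Nonempty := by
    by_contra! h
    refine hdF (hF.mem_of_forall_comparable hf (singleton_subset_iff.2 hd) hi fun B hB hBi => ?_)
    have hB0 : B = ∅ := by
      by_contra hB0
      exact notMem_empty B (h ▸ mem_filter.2 ⟨hB, hBi, nonempty_iff_ne_empty.2 hB0⟩)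
    exact Or.inl (hB0 ▸ empty_subset _)
  obtain ⟨M, hM⟩ := exists_minimal hne
  obtain ⟨hMF, hMi, hMne⟩ := mem_filter.1 hM.1
  refine ⟨M, hMF, hMi, hMne, fun B hB hBi hBne => ?_⟩
  rcases hf.2 M hMF B hB (hMi.trans hBi.symm) with h | h
  · exact h
  · exact hM.2 (mem_filter.2 ⟨hB, hBi, hBne⟩) h

end IsAntichainSaturated

namespace IsChainBottom

variable {n k : ℕ} {F : Finset (Finset ℕ)} {f : Finset ℕ → ℕ} {M T X U : Finset ℕ} {i : ℕ}

theorem mem_of_subset (hM : IsChainBottom F f i M) (hF : IsAntichainSaturated n (k + 1) F)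
    (hf : IsChainColoring F k f) (hXM : X ⊆ M) : X ∈ F := by
  refine hF.mem_of_forall_comparable hf (hXM.trans (hF.1 M hM.1)) (hM.2.1 ▸ hf.1 M hM.1)
    fun B hB hBi => ?_
  rcases B.eq_empty_or_nonempty with rfl | hBne
  · exact Or.inl (empty_subset X)
  · exact Or.inr (hXM.trans (hM.2.2.2 B hB hBi hBne))

theorem subset_of_singleton_mem_iff (hM : IsChainBottom F f i M)
    (hF : IsAntichainSaturated n (k + 1) F) (hf : IsChainColoring F k f)
    (hU : ∀ x, {x} ∈ F ↔ x ∈ U) : M ⊆ U := fun x hx =>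
  (hU x).1 (hM.mem_of_subset hF hf (singleton_subset_iff.2 hx))

/-- The antichain witnessing saturation at `{y}` meets the chain of `T` inside `T.erase y`. -/
theorem not_erase_subset (hM : IsChainBottom F f i M) (hF : IsAntichainSaturated n (k + 1) F)
    (hf : IsChainColoring F k f) (hT : T ∈ F) {y : ℕ} (hyT : y ∈ T) (hy : y ∈ Icc 1 n)
    (hyF : {y} ∉ F) (hi : i ≠ f T) : ¬ T.erase y ⊆ M := by
  intro hTM
  obtain ⟨W, hWF, hW, hWy, hWcol⟩ :=
    hF.exists_antichain_incomparable hf (singleton_subset_iff.2 hy) hyF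
  obtain ⟨w, hwW, hwf⟩ := hWcol (f T) (hf.1 T hT)
  obtain ⟨w', hw'W, hw'f⟩ := hWcol i (hM.2.1 ▸ hf.1 M hM.1)
  have hyw : y ∉ w := fun h => (hWy w hwW).2 (singleton_subset_iff.2 h)
  have hwT : w ⊆ T.erase y := by
    rcases hf.2 w (hWF hwW) T hT hwf with h | h
    · exact fun x hx => mem_erase.2 ⟨fun hxy => hyw (hxy ▸ hx), h hx⟩
    · exact absurd (h hyT) hyw
  have hw'ne : w'.Nonempty := by
    rw [nonempty_iff_ne_empty]
    rintro rfl
    exact (hWy _ hw'W).1 (empty_subset _)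
  have hww' : w ≠ w' := fun h => hi (by rw [← hw'f, ← h, hwf])
  exact hW hwW hw'W hww' (hwT.trans (hTM.trans (hM.2.2.2 w' (hWF hw'W) hw'f hw'ne)))

theorem exists_insert_mem_of_singleton {σ : ℕ} (hM : IsChainBottom F f i {σ})
    (hF : IsAntichainSaturated n (k + 1) F) (hf : IsChainColoring F k f) (hn : 3 ≤ n)
    (hmiss : ∀ B ∈ F, B.card = 2 → f B ≠ i) (x : ℕ) :
    ∃ q ≠ σ, q ≠ x ∧ insert q {σ} ∈ F ∧
      ∀ M, IsChainBottom F f (f (insert q {σ})) M → q ∈ M := by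
  obtain ⟨q, hqσ, hqx, hV⟩ := hF.exists_insert_mem hf hM.1 (by rw [card_singleton]; omega)
    (fun C hC hCf => by simpa using fun h => hmiss C hC h (hCf.trans hM.2.1)) x
  refine ⟨q, fun h => hqσ (h ▸ mem_singleton_self q), hqx, hV, fun M' hM' => ?_⟩
  by_contra hq
  have hM'σ : M' = {σ} := (hM'.2.2.1.subset_singleton_iff).1 fun z hz =>
    (mem_insert.1 (hM'.2.2.2 _ hV rfl (insert_nonempty q {σ}) hz)).resolve_left
      fun h => hq (h ▸ hz)
  exact hmiss _ hV (card_insert_of_notMem hqσ) (hM'.2.1.symm.trans (hM'σ ▸ hM.2.1))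

end IsChainBottom

section FiveSaturated

variable {n : ℕ} {F : Finset (Finset ℕ)} {f : Finset ℕ → ℕ} {U : Finset ℕ}

theorem subset_of_card_eq_two (hF : IsAntichainSaturated n 5 F) (hf : IsChainColoring F 4 f)
    (hU : ∀ x, {x} ∈ F ↔ x ∈ U) (hU3 : U.card = 3) (hn : 5 ≤ n)
    (h2 : (F.filter fun A => A.card = 2).card = 3) {T : Finset ℕ} (hT : T ∈ F)
    (hT2 : T.card = 2) : T ⊆ U := by
  intro y hyT
  by_contra hyU
  have hy : y ∈ Icc 1 n := hF.1 T hT hyT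
  have hyF : {y} ∉ F := fun h => hyU ((hU y).1 h)
  obtain ⟨r, hr⟩ : ∃ r, T.erase y = {r} := card_eq_one.1 (by rw [card_erase_of_mem hyT, hT2])
  have hrU : r ∈ U := by
    obtain ⟨M, hM⟩ := hF.exists_isChainBottom hf hy hyF (hf.1 T hT)
    obtain ⟨x, hx⟩ := hM.2.2.1
    have hxU := hM.subset_of_singleton_mem_iff hF hf hU hx
    have hxT : x ∈ T.erase y := mem_erase.2 ⟨fun h => hyU (h ▸ hxU), hM.2.2.2 T hT rfl ⟨y, hyT⟩ hx⟩
    exact mem_singleton.1 (hr ▸ hxT) ▸ hxU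
  have hrM : ∀ {j M}, IsChainBottom F f j M → j ≠ f T → r ∉ M := fun hM hj hrM =>
    hM.not_erase_subset hF hf hT hyT hy hyF hj (hr ▸ singleton_subset_iff.2 hrM)
  obtain ⟨m, hm, hmiss, -⟩ := hf.exists_missing_color_of_card_filter (i := 2) (by rw [h2])
  -- The chain of the colour missing on level 2 starts at a singleton `{σ}` with `σ ≠ r`.
  obtain ⟨M, hM⟩ := hF.exists_isChainBottom hf hy hyF hm
  have hMr : M ⊆ U.erase r := fun x hx => mem_erase.2
    ⟨fun h => hrM hM (fun h' => hmiss T hT hT2 h'.symm) (h ▸ hx),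
      hM.subset_of_singleton_mem_iff hF hf hU hx⟩
  obtain ⟨σ, rfl⟩ : ∃ σ, M = {σ} := by
    have hMcard := card_le_card hMr
    have hM2 : M.card ≠ 2 := fun h => hmiss M hM.1 h hM.2.1
    rw [card_erase_of_mem hrU, hU3] at hMcard
    exact card_eq_one.1 (by have := hM.2.2.1.card_pos; omega)
  have hσ : σ ∈ U.erase r := hMr (mem_singleton_self σ)
  obtain ⟨τ, hτ⟩ : ∃ τ, (U.erase r).erase σ = {τ} := card_eq_one.1 (by
    rw [card_erase_of_mem hσ, card_erase_of_mem hrU, hU3])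
  -- The chain through `{q, σ}` starts at a set containing `q ∈ U \ {σ, τ} = {r}`, so it is the
  -- chain of `T`.
  obtain ⟨q, hqσ, hqτ, hV, hqbot⟩ := hM.exists_insert_mem_of_singleton hF hf (by omega) hmiss τ
  obtain ⟨M', hM'⟩ := hF.exists_isChainBottom hf hy hyF (hf.1 _ hV)
  have hqM' := hqbot M' hM'
  have hqr : q = r := by
    by_contra hqr
    have : q ∈ (U.erase r).erase σ := mem_erase.2
      ⟨hqσ, mem_erase.2 ⟨hqr, hM'.subset_of_singleton_mem_iff hF hf hU hqM'⟩⟩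
    exact hqτ (mem_singleton.1 (hτ ▸ this))
  subst hqr
  have hVT : insert q {σ} = T := by
    by_contra hVT
    refine hrM hM' (fun h => hVT (hf.eq_of_card_eq hV hT h ?_)) hqM'
    rw [card_insert_of_notMem (by simpa using hqσ), card_singleton, hT2]
  have hσT : σ ∈ T.erase y := mem_erase.2
    ⟨fun h => hyU (h ▸ (mem_erase.1 hσ).2), hVT ▸ mem_insert_of_mem (mem_singleton_self σ)⟩
  exact (mem_erase.1 hσ).1 (mem_singleton.1 (hr ▸ hσT))

theorem mem_and_color_eq_of_missing (hF : IsAntichainSaturated n 5 F)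
    (hf : IsChainColoring F 4 f) (hU : ∀ x, {x} ∈ F ↔ x ∈ U) (hU3 : U.card = 3) (hn : 5 ≤ n)
    (hsub2 : ∀ T ∈ F, T.card = 2 → T ⊆ U) {m : ℕ} (hm : m < 4)
    (hmiss : ∀ B ∈ F, B.card = 2 → f B ≠ m) : U ∈ F ∧ f U = m := by
  obtain ⟨d, hd, hdU⟩ := exists_mem_notMem_of_card_lt_card (s := U) (t := Icc 1 n)
    (by rw [hU3, Nat.card_Icc]; omega)
  obtain ⟨M, hM⟩ := hF.exists_isChainBottom hf hd (fun h => hdU ((hU d).1 h)) hm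
  have hMU := hM.subset_of_singleton_mem_iff hF hf hU
  have hM2 : M.card ≠ 2 := fun h => hmiss M hM.1 h hM.2.1
  have hMcard := card_le_card hMU
  have hM0 := hM.2.2.1.card_pos
  rcases (by omega : M.card = 1 ∨ M.card = 3) with hM1 | hM3
  · -- The pairs `{x, σ}` with `x` below the next member `C` of the chain lie in `F`, so `C = U`.
    obtain ⟨σ, rfl⟩ := card_eq_one.1 hM1
    obtain ⟨C, hσC, hC, hint⟩ := hF.exists_interval_above hf hM.1
      (fun h => by have := congrArg card h; simp at this; omega)
    have hCU : C ⊆ U := fun x hx => by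
      by_cases hxσ : x = σ
      · exact hxσ ▸ hMU (mem_singleton_self σ)
      · have hV := hint _ (subset_insert x {σ}) (insert_subset hx hσC.subset)
        exact hsub2 _ hV (card_insert_of_notMem (by simpa using hxσ)) (mem_insert_self x {σ})
    have hCcard := card_le_card hCU
    rcases hC with rfl | ⟨hCF, hCf⟩
    · simp at hCcard
      omega
    · have hC2 : C.card ≠ 2 := fun h => hmiss C hCF h (hCf.trans hM.2.1)
      have := card_lt_card hσC
      rw [card_singleton] at this
      have hCU' : C = U := eq_of_subset_of_card_le hCU (by omega)
      exact hCU' ▸ ⟨hCF, hCf.trans hM.2.1⟩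
  · have hMU' : M = U := eq_of_subset_of_card_le hMU (by omega)
    exact hMU' ▸ ⟨hM.1, hM.2.1⟩

theorem card_filter_card_eq_three_ne (hF : IsAntichainSaturated n 5 F)
    (hf : IsChainColoring F 4 f) (hn : 5 ≤ n) (hU3 : U.card = 3)
    (hsub2 : ∀ T ∈ F, T.card = 2 → T ⊆ U) {m : ℕ}
    (hhit2 : ∀ j < 4, j ≠ m → ∃ B ∈ F, B.card = 2 ∧ f B = j) (hUF : U ∈ F) (hfU : f U = m) :
    (F.filter fun A => A.card = 3).card ≠ 3 := by
  intro h3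
  obtain ⟨m₃, hm₃, hmiss₃, -⟩ := hf.exists_missing_color_of_card_filter (i := 3) (by rw [h3])
  obtain ⟨l, hlF, hl2, hlf⟩ := hhit2 m₃ hm₃ fun h => hmiss₃ U hUF hU3 (hfU.trans h.symm)
  obtain ⟨x, hx⟩ : ∃ x, U \ l = {x} := card_eq_one.1 (by
    rw [card_sdiff_of_subset (hsub2 l hlF hl2), hU3, hl2])
  obtain ⟨q, hql, hqx, hY⟩ := hF.exists_insert_mem hf hlF (by omega)
    (fun C hC hCf => by rw [hl2]; exact fun h => hmiss₃ C hC h (hCf.trans hlf)) x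
  have hqU : q ∉ U := fun h => hqx (mem_singleton.1 (hx ▸ mem_sdiff.2 ⟨h, hql⟩))
  have hY3 : (insert q l).card = 3 := by rw [card_insert_of_notMem hql, hl2]
  have hYm : f (insert q l) ≠ m := fun h =>
    hqU (hf.eq_of_card_eq hY hUF (h.trans hfU.symm) (hY3.trans hU3.symm) ▸ mem_insert_self q l)
  -- The level-2 set sharing the colour of `insert q l` lies in `U ∩ insert q l = l`.
  obtain ⟨l', hl'F, hl'2, hl'f⟩ := hhit2 _ (hf.1 _ hY) hYm
  have hl'Y := hf.subset_of_card_le hl'F hY hl'f (by omega)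
  have hl'l : l' ⊆ l := fun z hz => (mem_insert.1 (hl'Y hz)).resolve_left
    fun h => hqU (h ▸ hsub2 l' hl'F hl'2 hz)
  have hl'eq : l' = l := eq_of_subset_of_card_le hl'l (by omega)
  exact hmiss₃ _ hY hY3 (by rw [← hl'f, hl'eq, hlf])

end FiveSaturated

/-- For `n ≥ 5` and `F` a 5-antichain saturated family of subsets of `[n]`, it is not the
case that every level `1 ≤ i ≤ n - 1` of `F` has exactly three sets. -/
theorem five_saturated_not_all_levels_three (n : ℕ) (hn : 5 ≤ n) (F : Finset (Finset ℕ))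
    (hF : IsAntichainSaturated n 5 F) :
    ¬ ∀ i, 1 ≤ i → i ≤ n - 1 → (F.filter fun A => A.card = i).card = 3 := by
  intro hlev
  obtain ⟨f, hf⟩ := exists_isChainColoring F 4 hF.widthLE
  set U := (Icc 1 n).filter fun x => {x} ∈ F
  have hU : ∀ x, {x} ∈ F ↔ x ∈ U := fun x => by
    simpa [U] using fun h => hF.1 _ h (mem_singleton_self x)
  have hU3 : U.card = 3 := by
    have hlevel1 : F.filter (fun A => A.card = 1) = U.image ({·}) := by
      ext A
      simp only [mem_filter, mem_image, card_eq_one, ← hU]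
      constructor
      · rintro ⟨hA, x, rfl⟩
        exact ⟨x, hA, rfl⟩
      · rintro ⟨x, hx, rfl⟩
        exact ⟨hx, x, rfl⟩
    rw [← card_image_of_injective U singleton_injective, ← hlevel1, hlev 1 le_rfl (by omega)]
  have h2 := hlev 2 (by norm_num) (by omega)
  have hsub2 : ∀ T ∈ F, T.card = 2 → T ⊆ U := fun T hT hT2 =>
    subset_of_card_eq_two hF hf hU hU3 hn h2 hT hT2
  obtain ⟨m, hm, hmiss, hhit⟩ := hf.exists_missing_color_of_card_filter (i := 2) (by rw [h2])
  obtain ⟨hUF, hfU⟩ := mem_and_color_eq_of_missing hF hf hU hU3 hn hsub2 hm hmiss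
  exact card_filter_card_eq_three_ne hF hf hn hU3 hsub2 hhit hUF hfU
    (hlev 3 (by norm_num) (by omega))
end

section
/- For every integer n ≥ 6 there exists a 6-antichain saturated family of subsets of [n] of size exactly 5n − 5. -/
open Finset

/-!
The family is the union of five maximal chains in the subsets of `[n]`: chain `i` consists of
the initial segments of the ordering of `[n]` that lists the first three letters of `word i`,
then `7, 8, …, n`, then the last three letters of `word i`. Five chains contain no 6-antichain.
At every level `2 ≤ k ≤ n - 2` the chains pass through five distinct `k`-sets (for
`3 ≤ k ≤ n - 3` they differ in their traces `take 3 (word i)` on `[6]`), at levels `1` and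
`n - 1` through four, and at levels `0` and `n` through one, which gives `5n - 5` sets.
A new `k`-set with `2 ≤ k ≤ n - 2` forms a 6-antichain with level `k`. A new singleton `{x}`
forms one with the five pairs of level 2, because each point of such a pair is already a
singleton of the family; dually a new `(n - 1)`-set forms one with the five `(n - 2)`-sets.
-/

theorem containsAntichain_iff {k : ℕ} {F : Finset (Finset ℕ)} :
    ContainsAntichain k F ↔ ∃ S ⊆ F, #S = k ∧ IsAntichain (· ⊆ ·) (S : Set (Finset ℕ)) :=
  Iff.rfl

theorem IsAntichain.card_le_of_forall_exists_isChain {α ι : Type*} [Fintype ι]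
    {r : α → α → Prop} {s : Finset α} (hs : IsAntichain r (s : Set α)) (c : ι → Set α)
    (hc : ∀ i, IsChain r (c i)) (hsc : ∀ a ∈ s, ∃ i, a ∈ c i) : #s ≤ Fintype.card ι := by
  choose f hf using hsc
  rw [← Fintype.card_coe]
  refine Fintype.card_le_of_injective (fun a : s => f a a.2) fun a b hab => Subtype.ext ?_
  have hb : (b : α) ∈ c (f a a.2) := by
    simp only at hab
    exact hab ▸ hf b b.2
  exact inter_subsingleton_of_isChain_of_isAntichain (hc _) hs ⟨hf a a.2, a.2⟩ ⟨hb, b.2⟩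

theorem containsAntichain_insert {F L : Finset (Finset ℕ)} {X : Finset ℕ} {c : ℕ}
    (hLF : L ⊆ F) (hLc : #L = c) (hL : IsAntichain (· ⊆ ·) (L : Set (Finset ℕ))) (hXF : X ∉ F)
    (hXL : ∀ A ∈ L, ¬ A ⊆ X ∧ ¬ X ⊆ A) : ContainsAntichain (c + 1) (insert X F) := by
  refine containsAntichain_iff.2 ⟨insert X L, insert_subset_insert X hLF,
    hLc ▸ card_insert_of_notMem fun h => hXF (hLF h), ?_⟩
  rw [coe_insert]
  exact hL.insert (fun A hA _ => (hXL A hA).1) (fun A hA _ => (hXL A hA).2)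

namespace SixSaturated

def word : Fin 5 → List ℕ :=
  ![[1, 2, 6, 3, 4, 5], [5, 1, 3, 4, 6, 2], [2, 3, 4, 1, 5, 6], [3, 1, 2, 5, 6, 4],
    [5, 3, 6, 1, 2, 4]]

def prefixes (k : ℕ) : Finset (Finset ℕ) := univ.image fun i => ((word i).take k).toFinset

def suffixes (k : ℕ) : Finset (Finset ℕ) := univ.image fun i => ((word i).drop k).toFinset

def ordering (n : ℕ) (i : Fin 5) : List ℕ :=
  (word i).take 3 ++ List.range' 7 (n - 6) ++ (word i).drop 3

def chain (n : ℕ) (i : Fin 5) (k : ℕ) : Finset ℕ := ((ordering n i).take k).toFinset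

def level (n k : ℕ) : Finset (Finset ℕ) := univ.image (chain n · k)

def family (n : ℕ) : Finset (Finset ℕ) := (range (n + 1)).biUnion (level n)

theorem nodup_word : ∀ i, (word i).Nodup := by decide

theorem toFinset_word : ∀ i, (word i).toFinset = Icc 1 6 := by decide

theorem mem_Icc_of_mem_word {i : Fin 5} {x : ℕ} (hx : x ∈ word i) : x ∈ Icc 1 6 :=
  toFinset_word i ▸ List.mem_toFinset.2 hx

theorem length_word : ∀ i, (word i).length = 6 := by decide

theorem ordering_perm (n : ℕ) (i : Fin 5) :
    (ordering n i).Perm (word i ++ List.range' 7 (n - 6)) := by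
  rw [ordering, List.append_assoc]
  conv_rhs => rw [← List.take_append_drop 3 (word i), List.append_assoc]
  exact List.perm_append_comm.append_left _

theorem nodup_ordering (n : ℕ) (i : Fin 5) : (ordering n i).Nodup := by
  refine (ordering_perm n i).nodup_iff.2 (List.nodup_append.2
    ⟨nodup_word i, List.nodup_range', fun a ha b hb => ?_⟩)
  have := (mem_Icc.1 (mem_Icc_of_mem_word ha)).2
  have := (List.mem_range'_1.1 hb).1
  omega

section

variable {n k : ℕ}

theorem toFinset_ordering (hn : 6 ≤ n) (i : Fin 5) : (ordering n i).toFinset = Icc 1 n := by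
  ext x
  rw [List.toFinset_eq_of_perm _ _ (ordering_perm n i), List.toFinset_append, mem_union,
    toFinset_word, List.mem_toFinset, List.mem_range'_1, mem_Icc, mem_Icc]
  omega

theorem length_ordering (hn : 6 ≤ n) (i : Fin 5) : (ordering n i).length = n := by
  rw [← List.toFinset_card_of_nodup (nodup_ordering n i), toFinset_ordering hn]
  simp

theorem monotone_chain (n : ℕ) (i : Fin 5) : Monotone (chain n i) := fun _ _ h _ hx =>
  List.mem_toFinset.2 (List.take_subset_take_left _ h (List.mem_toFinset.1 hx))

theorem card_chain (hn : 6 ≤ n) (hk : k ≤ n) (i : Fin 5) : #(chain n i k) = k := by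
  rw [chain, List.toFinset_card_of_nodup ((nodup_ordering n i).sublist (List.take_sublist _ _)),
    List.length_take, length_ordering hn]
  omega

theorem chain_subset_Icc (hn : 6 ≤ n) (i : Fin 5) (k : ℕ) : chain n i k ⊆ Icc 1 n := by
  rw [← toFinset_ordering hn i]
  exact fun x hx => List.mem_toFinset.2 (List.take_subset _ _ (List.mem_toFinset.1 hx))

theorem chain_eq_of_le_three (hk : k ≤ 3) (i : Fin 5) :
    chain n i k = ((word i).take k).toFinset := by
  rw [chain, ordering, List.take_append_of_le_length, List.take_append_of_le_length,
    List.take_take, min_eq_left hk] <;> simp [length_word] <;> omega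

theorem chain_eq_of_three_le (hk : 3 ≤ k) (hkn : k ≤ n - 3) (i : Fin 5) :
    chain n i k =
      ((word i).take 3).toFinset ∪ ((List.range' 7 (n - 6)).take (k - 3)).toFinset := by
  rw [chain, ordering, List.take_append_of_le_length, List.take_append,
    List.take_of_length_le, List.toFinset_append] <;> simp [length_word] <;> omega

theorem chain_eq_of_sub_three_le (hn : 6 ≤ n) (hk : n - 3 ≤ k) (i : Fin 5) :
    chain n i k = Icc 1 n \ ((word i).drop (k + 6 - n)).toFinset := by
  have hsplit : (ordering n i).drop k = (word i).drop (k + 6 - n) := by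
    rw [ordering, List.drop_append, List.drop_eq_nil_of_le, List.nil_append, List.drop_drop] <;>
      simp [length_word] <;> omega
  rw [← hsplit, ← toFinset_ordering hn i, ← List.take_append_drop k (ordering n i),
    List.toFinset_append, List.take_append_drop, union_sdiff_cancel_right, chain]
  exact List.disjoint_toFinset_iff_disjoint.2
    (List.disjoint_take_drop (nodup_ordering n i) le_rfl)

theorem sized_level (hn : 6 ≤ n) (hk : k ≤ n) : (level n k : Set (Finset ℕ)).Sized k := by
  intro A hA
  obtain ⟨i, -, rfl⟩ := mem_image.1 (mem_coe.1 hA)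
  exact card_chain hn hk i

theorem level_eq_prefixes (hk : k ≤ 3) : level n k = prefixes k := by
  simp only [level, prefixes, chain_eq_of_le_three hk]

theorem card_level_of_three_le (hk : 3 ≤ k) (hkn : k ≤ n - 3) : #(level n k) = 5 := by
  set T := ((List.range' 7 (n - 6)).take (k - 3)).toFinset
  have hT : ∀ A ∈ prefixes 3, Disjoint A T := by
    simp only [prefixes, mem_image, mem_univ, true_and, forall_exists_index,
      forall_apply_eq_imp_iff, disjoint_left, List.mem_toFinset, T]
    intro i x hx hxT
    have := (mem_Icc.1 (mem_Icc_of_mem_word (List.mem_of_mem_take hx))).2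
    have := (List.mem_range'_1.1 (List.mem_of_mem_take hxT)).1
    omega
  have hlevel : level n k = (prefixes 3).image (· ∪ T) := by
    simp only [level, prefixes, image_image, chain_eq_of_three_le hk hkn]
    rfl
  rw [hlevel, card_image_of_injOn, show #(prefixes 3) = 5 by decide]
  intro A hA B hB hAB
  rw [← union_sdiff_cancel_right (hT A hA), ← union_sdiff_cancel_right (hT B hB)]
  exact congrArg (· \ T) hAB

theorem level_eq_image_sdiff (hn : 6 ≤ n) (hk : n - 3 ≤ k) :
    level n k = (suffixes (k + 6 - n)).image (Icc 1 n \ ·) := by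
  simp only [level, suffixes, image_image, chain_eq_of_sub_three_le hn hk]
  rfl

theorem card_level_eq_card_suffixes (hn : 6 ≤ n) (hk : n - 3 ≤ k) :
    #(level n k) = #(suffixes (k + 6 - n)) := by
  rw [level_eq_image_sdiff hn hk, card_image_of_injOn]
  have hsub : ∀ s ∈ suffixes (k + 6 - n), s ⊆ Icc 1 n := by
    simp only [suffixes, mem_image, mem_univ, true_and, forall_exists_index,
      forall_apply_eq_imp_iff]
    intro i x hx
    exact Icc_subset_Icc_right hn
      (mem_Icc_of_mem_word (List.mem_of_mem_drop (List.mem_toFinset.1 hx)))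
  intro s hs t ht hst
  rw [← Finset.sdiff_sdiff_eq_self (hsub s hs), ← Finset.sdiff_sdiff_eq_self (hsub t ht)]
  exact congrArg (Icc 1 n \ ·) hst

theorem card_level_of_two_le (hn : 6 ≤ n) (hk : 2 ≤ k) (hkn : k ≤ n - 2) :
    #(level n k) = 5 := by
  obtain rfl | hk | hk : k = 2 ∨ (3 ≤ k ∧ k ≤ n - 3) ∨ k = n - 2 := by omega
  · rw [level_eq_prefixes (by norm_num)]
    decide
  · exact card_level_of_three_le hk.1 hk.2
  · rw [card_level_eq_card_suffixes hn (by omega), show k + 6 - n = 4 by omega]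
    decide

theorem mem_family {A : Finset ℕ} : A ∈ family n ↔ ∃ k ≤ n, A ∈ level n k := by
  simp [family]

theorem level_subset_family (hk : k ≤ n) : level n k ⊆ family n := fun _ hA =>
  mem_family.2 ⟨k, hk, hA⟩

theorem chain_mem_family (hk : k ≤ n) (i : Fin 5) : chain n i k ∈ family n :=
  level_subset_family hk (mem_image_of_mem _ (mem_univ i))

theorem subset_Icc_of_mem_family (hn : 6 ≤ n) {A : Finset ℕ} (hA : A ∈ family n) :
    A ⊆ Icc 1 n := by
  obtain ⟨k, -, hA⟩ := mem_family.1 hA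
  obtain ⟨i, -, rfl⟩ := mem_image.1 hA
  exact chain_subset_Icc hn i k

theorem not_containsAntichain_family : ¬ ContainsAntichain 6 (family n) := by
  rw [containsAntichain_iff]
  rintro ⟨S, hSF, hS6, hS⟩
  have := IsAntichain.card_le_of_forall_exists_isChain hS (fun i => Set.range (chain n i))
    (fun i => (monotone_chain n i).isChain_range) fun A hA => by
      obtain ⟨k, -, hA⟩ := mem_family.1 (hSF hA)
      obtain ⟨i, -, rfl⟩ := mem_image.1 hA
      exact ⟨i, k, rfl⟩
  simp only [Fintype.card_fin] at this
  omega

theorem card_family (hn : 6 ≤ n) : #(family n) = 5 * n - 5 := by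
  rw [family, card_biUnion]
  swap
  · intro k hk l hl hkl
    refine disjoint_left.2 fun A hAk hAl => hkl ?_
    rw [← sized_level hn (Nat.lt_succ_iff.1 (mem_range.1 hk)) hAk,
      sized_level hn (Nat.lt_succ_iff.1 (mem_range.1 hl)) hAl]
  obtain ⟨m, rfl⟩ : ∃ m, n = m + 6 := ⟨n - 6, by omega⟩
  have h0 : #(level (m + 6) 0) = 1 := by rw [level_eq_prefixes (by norm_num)]; decide
  have h1 : #(level (m + 6) 1) = 4 := by rw [level_eq_prefixes (by norm_num)]; decide
  have h5 : #(level (m + 6) (m + 5)) = 4 := by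
    rw [card_level_eq_card_suffixes hn (by omega), show m + 5 + 6 - (m + 6) = 5 by omega]
    decide
  have h6 : #(level (m + 6) (m + 6)) = 1 := by
    rw [card_level_eq_card_suffixes hn (by omega), show m + 6 + 6 - (m + 6) = 6 by omega]
    decide
  rw [sum_range_succ, sum_range_succ, sum_range_succ', sum_range_succ',
    sum_congr rfl fun k hk => card_level_of_two_le hn (k := k + 1 + 1) (by omega)
      (by simp only [mem_range] at hk; omega)]
  simp only [sum_const, card_range, smul_eq_mul, zero_add, h0, h1, h5, h6]
  omega

theorem empty_mem_family : ∅ ∈ family n := by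
  simpa [chain] using chain_mem_family (Nat.zero_le n) 0

theorem Icc_mem_family (hn : 6 ≤ n) : Icc 1 n ∈ family n := by
  rw [← toFinset_ordering hn 0, ← List.take_of_length_le (length_ordering hn 0).le]
  exact chain_mem_family le_rfl 0

theorem singleton_mem_prefixes_one : ∀ A ∈ prefixes 2, ∀ x ∈ A, {x} ∈ prefixes 1 := by decide

theorem singleton_mem_suffixes_five : ∀ s ∈ suffixes 4, ∀ x ∈ s, {x} ∈ suffixes 5 := by decide

variable {X : Finset ℕ}

theorem containsAntichain_insert_of_two_le_card (hn : 6 ≤ n) (hX : 2 ≤ #X) (hXn : #X ≤ n - 2)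
    (hXF : X ∉ family n) : ContainsAntichain 6 (insert X (family n)) := by
  have hsized := sized_level hn (k := #X) (by omega)
  refine containsAntichain_insert (level_subset_family (by omega))
    (card_level_of_two_le hn hX hXn) hsized.isAntichain hXF
    fun A hA => ⟨fun h => hXF ?_, fun h => hXF ?_⟩
  · rw [← eq_of_subset_of_card_le h (hsized hA).ge]
    exact level_subset_family (by omega) hA
  · rw [eq_of_subset_of_card_le h (hsized hA).le]
    exact level_subset_family (by omega) hA

theorem containsAntichain_insert_of_card_eq_one (hn : 6 ≤ n) (hX : #X = 1)
    (hXF : X ∉ family n) : ContainsAntichain 6 (insert X (family n)) := by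
  obtain ⟨x, rfl⟩ := card_eq_one.1 hX
  have hL := level_eq_prefixes (n := n) (k := 2) (by norm_num)
  refine containsAntichain_insert (level_subset_family (k := 2) (by omega)) (by rw [hL]; decide)
    (sized_level hn (by omega)).isAntichain hXF fun A hA => ⟨fun h => ?_, fun h => hXF ?_⟩
  · have := card_le_card h
    rw [sized_level hn (by omega) hA, card_singleton] at this
    omega
  · rw [hL] at hA
    refine level_subset_family (k := 1) (by omega) ?_
    rw [level_eq_prefixes (by norm_num)]
    exact singleton_mem_prefixes_one A hA x (h (mem_singleton_self x))

theorem containsAntichain_insert_of_card_eq_sub_one (hn : 6 ≤ n) (hX : X ⊆ Icc 1 n)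
    (hXn : #X = n - 1) (hXF : X ∉ family n) : ContainsAntichain 6 (insert X (family n)) := by
  obtain ⟨x, hx⟩ := card_eq_one.1 (show #(Icc 1 n \ X) = 1 by
    rw [card_sdiff_of_subset hX, Nat.card_Icc]; omega)
  have hXx : X = Icc 1 n \ {x} := by rw [← hx, Finset.sdiff_sdiff_eq_self hX]
  have hxX := mem_sdiff.1 (hx ▸ mem_singleton_self x)
  refine containsAntichain_insert (level_subset_family (by omega))
    (card_level_of_two_le hn (by omega) le_rfl)
    (sized_level hn (by omega)).isAntichain hXF fun A hA => ⟨fun h => hXF ?_, fun h => ?_⟩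
  · rw [level_eq_image_sdiff hn (by omega), show n - 2 + 6 - n = 4 by omega] at hA
    obtain ⟨s, hs, rfl⟩ := mem_image.1 hA
    have hxs : x ∈ s := by
      by_contra hxs
      exact hxX.2 (h (mem_sdiff.2 ⟨hxX.1, hxs⟩))
    refine hXx ▸ level_subset_family (k := n - 1) (by omega) ?_
    rw [level_eq_image_sdiff hn (by omega), show n - 1 + 6 - n = 5 by omega]
    exact mem_image_of_mem _ (singleton_mem_suffixes_five s hs x hxs)
  · have := card_le_card h
    rw [sized_level hn (by omega) hA, hXn] at this
    omega

theorem containsAntichain_insert_family (hn : 6 ≤ n) (hX : X ⊆ Icc 1 n)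
    (hXF : X ∉ family n) : ContainsAntichain 6 (insert X (family n)) := by
  have hXn : #X ≤ n := by simpa using card_le_card hX
  obtain h | h | h | h | h :
      #X = 0 ∨ #X = 1 ∨ (2 ≤ #X ∧ #X ≤ n - 2) ∨ #X = n - 1 ∨ #X = n := by omega
  · exact absurd (card_eq_zero.1 h ▸ empty_mem_family) hXF
  · exact containsAntichain_insert_of_card_eq_one hn h hXF
  · exact containsAntichain_insert_of_two_le_card hn h.1 h.2 hXF
  · exact containsAntichain_insert_of_card_eq_sub_one hn hX h hXF
  · exact absurd (eq_of_subset_of_card_le hX (by simp [h]) ▸ Icc_mem_family hn) hXF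

end

end SixSaturated

/-- For every integer `n ≥ 6` there exists a 6-antichain saturated family of subsets of
`[n]` of size exactly `5n - 5`. -/
theorem exists_six_saturated (n : ℕ) (hn : 6 ≤ n) :
    ∃ F : Finset (Finset ℕ), IsAntichainSaturated n 6 F ∧ F.card = 5 * n - 5 :=
  ⟨SixSaturated.family n, ⟨fun _ => SixSaturated.subset_Icc_of_mem_family hn,
    SixSaturated.not_containsAntichain_family,
    fun _ => SixSaturated.containsAntichain_insert_family hn⟩, SixSaturated.card_family hn⟩
end
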